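/- The point z = (z_1, ..., z_{2q}) in the torus T^{2q} is not contained in any proper rational affine subspace; equivalently, there is no nonzero integer vector (a_1, ..., a_{2q}) and integer c such that a_1 z_1 + ... + a_{2q} z_{2q} = c. -/

import Mathlib

/-!
Interleave the two families into one series `∑ₘ ∑ᵢ dₘ(i) pᵢ^(-N^(m+2)) = c` whose coefficient
vector `dₘ` is `a` for even `m` and `b` for odd `m`. Multiplying the relation by
`(∏ᵢ pᵢ)^(N^(m+2))` clears the denominators of the first `m + 1` terms, so the tail becomes an
integer. The tail is `O(p₁^(-N^(m+3)))`, and `∏ᵢ pᵢ ≤ p_q^q < p₁^N` is exactly what makes the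
integer tend to `0`; hence every tail, and so every term, vanishes for large `m`. Finally
`n ↦ ∑ᵢ vᵢ pᵢ^(-n)` has no zeros for large `n` unless `v = 0`, because the term with the smallest
base carrying a nonzero coefficient dominates; applied along even and odd `m` this gives
`a = b = 0`.
-/

open Filter Topology Finset

lemma inv_pow_le_inv_pow_mul_half_pow {x : ℝ} (hx : 2 ≤ x) {a b k : ℕ} (h : a + k ≤ b) :
    (x ^ b)⁻¹ ≤ (x ^ a)⁻¹ * (1 / 2) ^ k := by
  rw [one_div, inv_pow, ← mul_inv]
  refine inv_anti₀ (by positivity) ?_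
  calc x ^ a * 2 ^ k ≤ x ^ a * x ^ k := by gcongr
    _ = x ^ (a + k) := (pow_add x a k).symm
    _ ≤ x ^ b := pow_le_pow_right₀ (by linarith) h

lemma summable_inv_pow_of_strictMono {x : ℝ} (hx : 2 ≤ x) {f : ℕ → ℕ} (hf : StrictMono f) :
    Summable fun k ↦ (x ^ f k)⁻¹ :=
  .of_nonneg_of_le (fun _ ↦ by positivity)
    (fun k ↦ inv_pow_le_inv_pow_mul_half_pow hx (by simpa [add_comm] using hf.add_le_nat k 0))
    (summable_geometric_two.mul_left _)

lemma eq_zero_of_frequently_sum_mul_inv_pow_eq_zero {ι : Type*} [Fintype ι] {x : ι → ℝ}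
    (hx : Function.Injective x) (hx₀ : ∀ i, 0 < x i) {v : ι → ℝ}
    (h : ∃ᶠ n : ℕ in atTop, ∑ i, v i * (x i ^ n)⁻¹ = 0) : v = 0 := by
  classical
  by_contra hv
  obtain ⟨i₀, hi₀, hmin⟩ := ({i | v i ≠ 0} : Finset ι).exists_min_image x
    (by simpa [Finset.Nonempty, funext_iff] using hv)
  simp only [Finset.mem_filter, Finset.mem_univ, true_and] at hi₀ hmin
  -- after scaling by `x i₀ ^ n`, every term other than the one at `i₀` decays geometrically
  have hlim : Tendsto (fun n : ℕ ↦ ∑ i, v i * (x i₀ / x i) ^ n) atTop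
      (𝓝 (∑ i, if i = i₀ then v i₀ else 0)) := by
    refine tendsto_finsetSum _ fun i _ ↦ ?_
    by_cases hi : i = i₀
    · subst hi
      simp [div_self (hx₀ i).ne']
    by_cases hvi : v i = 0
    · simp [hvi, hi]
    have hlt : x i₀ < x i := (hmin i hvi).lt_of_ne (hx.ne (Ne.symm hi))
    simpa [hi] using (tendsto_pow_atTop_nhds_zero_of_lt_one (div_nonneg (hx₀ i₀).le (hx₀ i).le)
      ((div_lt_one (hx₀ i)).2 hlt)).const_mul (v i)
  rw [Finset.sum_ite_eq' univ i₀, if_pos (mem_univ _)] at hlim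
  refine h ((hlim.eventually_ne hi₀).mono fun n hn hsum ↦ hn ?_)
  have hscale : ∑ i, v i * (x i₀ / x i) ^ n = x i₀ ^ n * ∑ i, v i * (x i ^ n)⁻¹ := by
    rw [Finset.mul_sum]
    refine Finset.sum_congr rfl fun i _ ↦ ?_
    rw [div_pow, div_eq_mul_inv]
    ring
  rw [hscale, hsum, mul_zero]

lemma prod_lt_pow_of_card_mul_log_div_log_lt {ι : Type*} [Fintype ι] {p : ι → ℕ} {P₀ P₁ N : ℕ}
    (hP₀ : 1 < P₀) (hP₁ : 0 < P₁) (hp : ∀ i, p i ≤ P₁)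
    (h : (Fintype.card ι : ℝ) * Real.log P₁ / Real.log P₀ < N) : ∏ i, p i < P₀ ^ N := by
  rw [div_lt_iff₀ (Real.log_pos (by exact_mod_cast hP₀))] at h
  have hpow : (P₁ : ℝ) ^ Fintype.card ι < (P₀ : ℝ) ^ N := by
    rwa [← Real.log_lt_log_iff (by positivity) (by positivity), Real.log_pow, Real.log_pow]
  calc ∏ i, p i ≤ P₁ ^ Fintype.card ι := Finset.prod_le_pow_card _ _ _ fun i _ ↦ hp i
    _ < P₀ ^ N := by exact_mod_cast hpow

section Lacunary

variable {ι : Type*} [Fintype ι]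

noncomputable def lacunaryTerm (p : ι → ℕ) (e : ℕ → ℕ) (d : ℕ → ι → ℤ) (m : ℕ) : ℝ :=
  ∑ i, (d m i : ℝ) * ((p i : ℝ) ^ e m)⁻¹

variable {p : ι → ℕ} {e : ℕ → ℕ} {d : ℕ → ι → ℤ} {P₀ : ℕ} {M : ι → ℝ}

lemma abs_lacunaryTerm_le (hP₀ : 0 < P₀) (hp : ∀ i, P₀ ≤ p i) (hd : ∀ m i, |(d m i : ℝ)| ≤ M i)
    (m : ℕ) : |lacunaryTerm p e d m| ≤ (∑ i, M i) * ((P₀ : ℝ) ^ e m)⁻¹ := by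
  rw [Finset.sum_mul]
  refine (Finset.abs_sum_le_sum_abs _ _).trans (Finset.sum_le_sum fun i _ ↦ ?_)
  rw [abs_mul, abs_of_nonneg (a := ((p i : ℝ) ^ e m)⁻¹) (by positivity)]
  exact mul_le_mul (hd m i) (inv_anti₀ (by positivity) (by gcongr; exact hp i)) (by positivity)
    ((abs_nonneg _).trans (hd m i))

lemma abs_tsum_lacunaryTerm_le (hP₀ : 2 ≤ P₀) (hp : ∀ i, P₀ ≤ p i)
    (hd : ∀ m i, |(d m i : ℝ)| ≤ M i) (he : StrictMono e) (m : ℕ) :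
    |∑' k, lacunaryTerm p e d (k + m)| ≤ 2 * (∑ i, M i) * ((P₀ : ℝ) ^ e m)⁻¹ := by
  have hC : 0 ≤ ∑ i, M i := Finset.sum_nonneg fun i _ ↦ (abs_nonneg _).trans (hd 0 i)
  have hbound := hasSum_geometric_two.mul_left ((∑ i, M i) * ((P₀ : ℝ) ^ e m)⁻¹)
  calc |∑' k, lacunaryTerm p e d (k + m)| = ‖∑' k, lacunaryTerm p e d (k + m)‖ :=
        (Real.norm_eq_abs _).symm
    _ ≤ (∑ i, M i) * ((P₀ : ℝ) ^ e m)⁻¹ * 2 := tsum_of_norm_bounded hbound fun k ↦ ?_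
    _ = 2 * (∑ i, M i) * ((P₀ : ℝ) ^ e m)⁻¹ := by ring
  rw [Real.norm_eq_abs, mul_assoc]
  refine (abs_lacunaryTerm_le (by omega) hp hd _).trans (mul_le_mul_of_nonneg_left ?_ hC)
  exact inv_pow_le_inv_pow_mul_half_pow (by exact_mod_cast hP₀)
    (by simpa [add_comm] using he.add_le_nat k m)

lemma mul_tsum_lacunaryTerm_mem_range (hp : ∀ i, p i ≠ 0) (he : Monotone e) {c : ℤ}
    (hG : HasSum (lacunaryTerm p e d) c) (m : ℕ) :
    (((∏ i, p i) ^ e m : ℕ) : ℝ) * ∑' k, lacunaryTerm p e d (k + (m + 1)) ∈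
      (Int.castRingHom ℝ).range := by
  rw [← sub_eq_of_eq_add' (hG.summable.sum_add_tsum_nat_add (m + 1)).symm, hG.tsum_eq, mul_sub,
    Finset.mul_sum]
  refine sub_mem (mul_mem (natCast_mem _ _) (intCast_mem _ _)) (sum_mem fun k hk ↦ ?_)
  rw [lacunaryTerm, Finset.mul_sum]
  refine sum_mem fun i _ ↦ ?_
  obtain ⟨t, ht⟩ : p i ^ e k ∣ (∏ j, p j) ^ e m :=
    (pow_dvd_pow_of_dvd (Finset.dvd_prod_of_mem _ (Finset.mem_univ i)) _).trans
      (pow_dvd_pow _ (he (Nat.lt_succ_iff.mp (Finset.mem_range.mp hk))))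
  have hpk : (p i : ℝ) ^ e k ≠ 0 := pow_ne_zero _ (Nat.cast_ne_zero.mpr (hp i))
  convert intCast_mem (Int.castRingHom ℝ).range (d k i * t) using 1
  rw [ht]
  push_cast
  field_simp

theorem eventually_lacunaryTerm_eq_zero {N : ℕ} (hP₀ : 2 ≤ P₀) (hp : ∀ i, P₀ ≤ p i)
    (hP : ∏ i, p i < P₀ ^ N) (he : StrictMono e) (heN : ∀ m, e (m + 1) = N * e m)
    (hd : ∀ m i, |(d m i : ℝ)| ≤ M i) {c : ℤ} (hG : HasSum (lacunaryTerm p e d) c) :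
    ∀ᶠ m in atTop, lacunaryTerm p e d m = 0 := by
  set T : ℕ → ℝ := fun m ↦ ∑' k, lacunaryTerm p e d (k + m)
  set r : ℝ := (∏ i, p i : ℕ) / ((P₀ ^ N : ℕ) : ℝ) with hr
  have hr₀ : 0 ≤ r := by positivity
  have hr₁ : r < 1 := (div_lt_one (by positivity)).2 (by exact_mod_cast hP)
  have hsmall : ∀ m, (((∏ i, p i) ^ e m : ℕ) : ℝ) * |T (m + 1)| ≤ 2 * (∑ i, M i) * r ^ e m := by
    intro m
    calc _ ≤ (((∏ i, p i) ^ e m : ℕ) : ℝ) * (2 * (∑ i, M i) * ((P₀ : ℝ) ^ e (m + 1))⁻¹) :=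
          mul_le_mul_of_nonneg_left (abs_tsum_lacunaryTerm_le hP₀ hp hd he _) (by positivity)
      _ = 2 * (∑ i, M i) * r ^ e m := by
          rw [hr, heN, pow_mul, div_pow]
          push_cast
          ring
  have hlim : Tendsto (fun m ↦ 2 * (∑ i, M i) * r ^ e m) atTop (𝓝 0) := by
    simpa using ((tendsto_pow_atTop_nhds_zero_of_lt_one hr₀ hr₁).comp he.tendsto_atTop).const_mul
      (2 * ∑ i, M i)
  have hp_pos (i : ι) : 0 < p i := (by omega : 0 < P₀).trans_le (hp i)
  have hT₁ : ∀ᶠ m in atTop, T (m + 1) = 0 := by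
    filter_upwards [hlim.eventually (gt_mem_nhds one_pos)] with m hm
    obtain ⟨z, hz⟩ := mul_tsum_lacunaryTerm_mem_range (fun i ↦ (hp_pos i).ne') he.monotone hG m
    have hQ : (0 : ℝ) < ((∏ i, p i) ^ e m : ℕ) :=
      Nat.cast_pos.mpr (pow_pos (Finset.prod_pos fun i _ ↦ hp_pos i) _)
    have hz₀ : z = 0 := by
      rw [← Int.abs_lt_one_iff, ← Int.cast_lt (R := ℝ), Int.cast_abs, Int.cast_one]
      simp only [eq_intCast] at hz
      rw [hz, abs_mul, abs_of_pos hQ]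
      exact (hsmall m).trans_lt hm
    simp only [hz₀, eq_intCast, Int.cast_zero] at hz
    exact (mul_eq_zero.mp hz.symm).resolve_left hQ.ne'
  have hT₀ : ∀ᶠ m in atTop, T m = 0 := by
    rw [← map_add_atTop_eq_nat 1, eventually_map]
    exact hT₁
  filter_upwards [hT₀, hT₁] with m h₀ h₁
  have hsplit := ((summable_nat_add_iff m).2 hG.summable).tsum_eq_zero_add
  simp only [zero_add, add_assoc, add_comm 1 m] at hsplit
  linarith [show T m = lacunaryTerm p e d m + T (m + 1) from hsplit]

lemma eq_zero_of_eventually_lacunaryTerm_eq_zero (hp : Function.Injective p) (hp₀ : ∀ i, 0 < p i)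
    (he : StrictMono e) (h : ∀ᶠ m in atTop, lacunaryTerm p e d m = 0) {φ : ℕ → ℕ}
    (hφ : StrictMono φ) {v : ι → ℤ} (hv : ∀ k, d (φ k) = v) : v = 0 := by
  have hvφ : ∃ᶠ k in atTop, ∑ i, (v i : ℝ) * ((p i : ℝ) ^ e (φ k))⁻¹ = 0 :=
    (hφ.tendsto_atTop.eventually h).frequently.mono fun k hk ↦ by
      simpa [lacunaryTerm, hv] using hk
  have hv₀ := eq_zero_of_frequently_sum_mul_inv_pow_eq_zero (x := fun i ↦ (p i : ℝ))
    (Nat.cast_injective.comp hp) (fun i ↦ Nat.cast_pos.mpr (hp₀ i))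
    ((he.comp hφ).tendsto_atTop.frequently hvφ)
  funext i
  simpa using congrFun hv₀ i

lemma hasSum_lacunaryTerm_even_odd (hp : ∀ i, 2 ≤ p i) {N : ℕ} (hN : 2 ≤ N) (a b : ι → ℤ) :
    HasSum (lacunaryTerm p (fun m ↦ N ^ (m + 2)) fun m ↦ if Even m then a else b)
      (∑ i, ((a i : ℝ) * ∑' k : ℕ, ((p i : ℝ) ^ (N ^ (2 * (k + 1))))⁻¹ +
        (b i : ℝ) * ∑' k : ℕ, ((p i : ℝ) ^ (N ^ (2 * (k + 1) + 1)))⁻¹)) := by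
  have hsum (c : ι → ℤ) {g : ℕ → ℕ} (hg : StrictMono g) :
      HasSum (fun k ↦ ∑ i, (c i : ℝ) * ((p i : ℝ) ^ N ^ g k)⁻¹)
        (∑ i, (c i : ℝ) * ∑' k, ((p i : ℝ) ^ N ^ g k)⁻¹) :=
    hasSum_sum fun i _ ↦ ((summable_inv_pow_of_strictMono (x := p i) (by exact_mod_cast hp i)
      ((pow_right_strictMono₀ (by omega : 1 < N)).comp hg)).hasSum.mul_left (c i : ℝ))
  rw [Finset.sum_add_distrib]
  refine HasSum.even_add_odd ?_ ?_
  · convert hsum a (g := fun k ↦ 2 * (k + 1)) fun _ _ h ↦ by dsimp only; omega using 1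
    funext k
    simp [lacunaryTerm, mul_add]
  · convert hsum b (g := fun k ↦ 2 * (k + 1) + 1) fun _ _ h ↦ by dsimp only; omega using 1
    funext k
    simp [lacunaryTerm, mul_add, add_right_comm _ 1 2]

end Lacunary

/-- There is no nonzero integer vector `(a, b)` and integer `c` with
`∑ i (a i * z i + b i * z_{i+q}) = c`; i.e. the point `z` lies in no proper rational
affine subspace. -/
theorem stmt3 (q : ℕ) (hq : 2 ≤ q) (p : Fin q → ℕ) (hp1 : ∀ i, 1 < p i)
    (hmono : StrictMono p) (N : ℕ)
    (hN : (q : ℝ) * Real.log (p ⟨q - 1, by omega⟩) / Real.log (p ⟨0, by omega⟩) < (N : ℝ))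
    (zA zB : Fin q → ℝ)
    (hzA : ∀ i, zA i = ∑' k : ℕ, ((p i : ℝ) ^ (N ^ (2 * (k + 1))))⁻¹)
    (hzB : ∀ i, zB i = ∑' k : ℕ, ((p i : ℝ) ^ (N ^ (2 * (k + 1) + 1)))⁻¹) :
    ¬ ∃ (a b : Fin q → ℤ) (c : ℤ), (a ≠ 0 ∨ b ≠ 0) ∧
      ∑ i, ((a i : ℝ) * zA i + (b i : ℝ) * zB i) = (c : ℝ) := by
  rintro ⟨a, b, c, hab, hc⟩
  have hp₀ (i : Fin q) : p ⟨0, by omega⟩ ≤ p i :=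
    hmono.monotone (Fin.mk_le_of_le_val (Nat.zero_le _))
  have hp₁ (i : Fin q) : p i ≤ p ⟨q - 1, by omega⟩ :=
    hmono.monotone (Fin.le_def.2 (Nat.le_sub_one_of_lt i.isLt))
  have hP : ∏ i, p i < p ⟨0, by omega⟩ ^ N :=
    prod_lt_pow_of_card_mul_log_div_log_lt (hp1 _) (zero_lt_one.trans (hp1 _)) hp₁
      (by rwa [Fintype.card_fin])
  have hqN : q < N := by
    have := (Finset.pow_card_le_prod _ _ _ fun i _ ↦ hp₀ i).trans_lt hP
    rwa [Finset.card_univ, Fintype.card_fin, Nat.pow_lt_pow_iff_right (hp1 _)] at this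
  have he : StrictMono fun m ↦ N ^ (m + 2) := fun _ _ h ↦ Nat.pow_lt_pow_right (by omega) (by omega)
  have hG := hasSum_lacunaryTerm_even_odd hp1 (by omega : 2 ≤ N) a b
  simp only [← hzA, ← hzB, hc] at hG
  have hzero := eventually_lacunaryTerm_eq_zero (hp1 _) hp₀ hP he (fun m ↦ by ring)
    (M := fun i ↦ |(a i : ℝ)| + |(b i : ℝ)|) (fun m i ↦ by split_ifs <;> simp) hG
  have hp_pos (i : Fin q) : 0 < p i := zero_lt_one.trans (hp1 i)
  have ha := eq_zero_of_eventually_lacunaryTerm_eq_zero hmono.injective hp_pos he hzero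
    (φ := fun k ↦ 2 * k) (strictMono_mul_left_of_pos two_pos) fun k ↦ if_pos (even_two_mul k)
  have hb := eq_zero_of_eventually_lacunaryTerm_eq_zero hmono.injective hp_pos he hzero
    (φ := fun k ↦ 2 * k + 1) (fun _ _ h ↦ by dsimp only; omega) fun k ↦ if_neg (by simp)
  exact hab.elim (absurd ha) (absurd hb)
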